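/- Let H be a negative, sublinear, Γ-invariant function on the open future cone 𝓕. Then the set K = {x ∈ 𝓕 : ⟨x,η⟩₋ ≤ H(η) for all η ∈ 𝓕} is a Γ-convex body whose extended support function is H. -/

import Mathlib

open Pointwise

noncomputable section

/-- The Minkowski bilinear form on ℝ^{d+1}. -/
def mink (d : ℕ) (x y : Fin (d+1) → ℝ) : ℝ :=
  (∑ i : Fin d, x i.castSucc * y i.castSucc) - x (Fin.last d) * y (Fin.last d)

/-- The open future cone. -/
def FutureCone (d : ℕ) : Set (Fin (d+1) → ℝ) :=
  {x | mink d x x < 0 ∧ 0 < x (Fin.last d)}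

/-- The hyperboloid model of hyperbolic space. -/
def Hyperboloid (d : ℕ) : Set (Fin (d+1) → ℝ) :=
  {x | mink d x x = -1 ∧ 0 < x (Fin.last d)}

/-- A Fuchsian group: linear isometries of the Minkowski form preserving the future
cone and acting freely cocompactly on the hyperboloid. -/
structure IsFuchsian (d : ℕ)
    (Γ : Subgroup ((Fin (d+1) → ℝ) ≃ₗ[ℝ] (Fin (d+1) → ℝ))) : Prop where
  isom : ∀ γ ∈ Γ, ∀ x y, mink d (γ x) (γ y) = mink d x y
  cone : ∀ γ ∈ Γ, ∀ x ∈ FutureCone d, γ x ∈ FutureCone d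
  free : ∀ γ ∈ Γ, γ ≠ 1 → ∀ x ∈ Hyperboloid d, γ x ≠ x
  cocompact : ∃ C : Set (Fin (d+1) → ℝ), IsCompact C ∧ C ⊆ Hyperboloid d ∧
    ∀ x ∈ Hyperboloid d, ∃ γ ∈ Γ, ∃ c ∈ C, γ c = x

/-- A Γ-convex (Fuchsian convex) body. -/
structure IsFuchsianConvexBody (d : ℕ)
    (Γ : Subgroup ((Fin (d+1) → ℝ) ≃ₗ[ℝ] (Fin (d+1) → ℝ)))
    (K : Set (Fin (d+1) → ℝ)) : Prop where
  nonempty : K.Nonempty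
  isClosed : IsClosed K
  convex : Convex ℝ K
  subset : K ⊆ FutureCone d
  proper : K ≠ FutureCone d
  invariant : ∀ γ ∈ Γ, (⇑γ) '' K = K


/-! Sublinearity makes `H` convex, hence continuous, on the open cone `𝓕`. Being `Γ`-invariant
and continuous, `H` attains a maximum `-m < 0` on the compact quotient `ℍ^d / Γ`; so every `x`
with `⟨x, η⟩₋ ≤ H η` for all `η` is timelike (a non-timelike `x` pairs almost nonnegatively with
suitable points of `ℍ^d`), and `K` is an intersection of closed half-spaces. At `η₀ ∈ 𝓕`,
separating `(η₀, H η₀)` from the open strict epigraph of `H` gives a supporting affine functional,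
which homogeneity makes linear; written as `⟨x, ·⟩₋` it yields a point `x ∈ K` with
`⟨x, η₀⟩₋ = H η₀`. -/

open Set Filter Topology

theorem ConvexCone.convexOn_of_subadditive {E : Type*} [AddCommGroup E] [Module ℝ E]
    (C : ConvexCone ℝ E) {H : E → ℝ}
    (hhom : ∀ x ∈ C, ∀ l : ℝ, 0 < l → H (l • x) = l * H x)
    (hsub : ∀ x ∈ C, ∀ y ∈ C, H (x + y) ≤ H x + H y) :
    ConvexOn ℝ C H := by
  refine convexOn_iff_forall_pos.2 ⟨C.convex, fun x hx y hy a b ha hb _ => ?_⟩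
  calc H (a • x + b • y) ≤ H (a • x) + H (b • y) :=
        hsub _ (C.smul_mem ha hx) _ (C.smul_mem hb hy)
    _ = a • H x + b • H y := by rw [hhom x hx a ha, hhom y hy b hb, smul_eq_mul, smul_eq_mul]

section Supporting

variable {E : Type*} [AddCommGroup E] [TopologicalSpace E] [IsTopologicalAddGroup E]
  [Module ℝ E] [ContinuousSMul ℝ E] {U : Set E} {f : E → ℝ}

theorem ConvexOn.exists_isMaxOn_sub (hU : IsOpen U) (hf : ConvexOn ℝ U f)
    (hfc : ContinuousOn f U) {x₀ : E} (hx₀ : x₀ ∈ U) :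
    ∃ L : StrongDual ℝ E, IsMaxOn (fun x => L x - f x) U x₀ := by
  set S : Set (E × ℝ) := {p | p.1 ∈ U ∧ f p.1 < p.2}
  have hSopen : IsOpen S := by
    have hcont : ContinuousOn (fun p : E × ℝ => p.2 - f p.1) (U ×ˢ univ) :=
      continuousOn_snd.sub (hfc.comp continuousOn_fst fun p hp => hp.1)
    convert hcont.isOpen_inter_preimage (hU.prod isOpen_univ) (isOpen_Ioi (a := 0)) using 1
    ext p
    simp [S]
  obtain ⟨φ, hφ⟩ := geometric_hahn_banach_open_point hf.convex_strict_epigraph hSopen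
    (x := (x₀, f x₀)) fun h => lt_irrefl _ h.2
  set ℓ : StrongDual ℝ E := φ.comp (ContinuousLinearMap.inl ℝ E ℝ)
  set c : ℝ := φ (0, 1)
  have hφ_apply : ∀ v t, φ (v, t) = ℓ v + t * c := fun v t => by
    have hvt : ((v, t) : E × ℝ) = (v, 0) + t • (0, 1) := by simp
    rw [hvt, map_add, map_smul, smul_eq_mul]
    rfl
  have hc : c < 0 := by
    have := hφ (x₀, f x₀ + 1) ⟨hx₀, lt_add_one _⟩
    rw [hφ_apply, hφ_apply] at this
    linarith
  -- `(x, f x)` is a limit of points of the strict epigraph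
  have hle : ∀ x ∈ U, ℓ x + f x * c ≤ ℓ x₀ + f x₀ * c := fun x hx => by
    have hlim : Tendsto (fun t => ℓ x + t * c) (𝓝[>] (f x)) (𝓝 (ℓ x + f x * c)) :=
      ((continuous_const.add (continuous_id.mul continuous_const)).tendsto _).mono_left
        nhdsWithin_le_nhds
    refine le_of_tendsto hlim (eventually_nhdsWithin_of_forall fun t ht => ?_)
    simpa only [hφ_apply] using (hφ (x, t) ⟨hx, ht⟩).le
  have hscale : ∀ x, -c * ((-c)⁻¹ * ℓ x - f x) = ℓ x + f x * c := fun x => by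
    field_simp [hc.ne]
    ring
  refine ⟨(-c)⁻¹ • ℓ, fun x hx => ?_⟩
  refine le_of_mul_le_mul_left ?_ (neg_pos.2 hc)
  simpa only [FunLike.coe_smul, Pi.smul_apply, smul_eq_mul, hscale] using hle x hx

theorem ConvexOn.exists_le_eq_of_homogeneous (C : ConvexCone ℝ E) (hC : IsOpen (C : Set E))
    (hf : ConvexOn ℝ C f) (hfc : ContinuousOn f C)
    (hhom : ∀ x ∈ C, ∀ l : ℝ, 0 < l → f (l • x) = l * f x) {x₀ : E} (hx₀ : x₀ ∈ C) :
    ∃ L : StrongDual ℝ E, (∀ x ∈ C, L x ≤ f x) ∧ L x₀ = f x₀ := by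
  obtain ⟨L, hL⟩ := hf.exists_isMaxOn_sub hC hfc hx₀
  have hscale : ∀ l : ℝ, 0 < l → l * (L x₀ - f x₀) ≤ L x₀ - f x₀ := fun l hl => by
    have := hL (C.smul_mem hl hx₀)
    simpa only [mem_ofPred_eq, map_smul, smul_eq_mul, hhom x₀ hx₀ l hl, mul_sub] using this
  have hzero : L x₀ - f x₀ = 0 := by
    linarith [hscale 2 two_pos, hscale (1 / 2) one_half_pos]
  refine ⟨L, fun x hx => ?_, by linarith⟩
  linarith [show L x - f x ≤ L x₀ - f x₀ from hL hx]

end Supporting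

theorem exists_isMaxOn_of_cocompact {α β F : Type*} [TopologicalSpace α] [TopologicalSpace β]
    [LinearOrder β] [ClosedIciTopology β] [FunLike F α α] {Γ : Set F} {S C : Set α}
    {f : α → β} (hC : IsCompact C) (hCS : C ⊆ S)
    (hcov : ∀ x ∈ S, ∃ γ ∈ Γ, ∃ c ∈ C, γ c = x) (hS : S.Nonempty) (hf : ContinuousOn f C)
    (hinv : ∀ γ ∈ Γ, ∀ c ∈ C, f (γ c) = f c) :
    ∃ c ∈ S, IsMaxOn f S c := by
  obtain ⟨x, hx⟩ := hS
  obtain ⟨-, -, c, hc, -⟩ := hcov x hx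
  obtain ⟨c₀, hc₀, hmax⟩ := hC.exists_isMaxOn ⟨c, hc⟩ hf
  refine ⟨c₀, hCS hc₀, fun y hy => ?_⟩
  obtain ⟨γ, hγ, c, hc, rfl⟩ := hcov y hy
  rw [mem_ofPred_eq, hinv γ hγ c hc]
  exact hmax hc

section Minkowski

variable {d : ℕ}

theorem mink_comm (x y : Fin (d+1) → ℝ) : mink d x y = mink d y x := by
  simp only [mink, mul_comm]

theorem mink_add_left (x y z : Fin (d+1) → ℝ) :
    mink d (x + y) z = mink d x z + mink d y z := by
  simp only [mink, Pi.add_apply, add_mul, Finset.sum_add_distrib]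
  ring

theorem mink_add_right (x y z : Fin (d+1) → ℝ) :
    mink d x (y + z) = mink d x y + mink d x z := by
  rw [mink_comm, mink_add_left, mink_comm y, mink_comm z]

theorem mink_smul_left (a : ℝ) (x y : Fin (d+1) → ℝ) :
    mink d (a • x) y = a * mink d x y := by
  simp only [mink, Pi.smul_apply, smul_eq_mul, mul_sub, Finset.mul_sum, mul_assoc]

theorem mink_smul_right (a : ℝ) (x y : Fin (d+1) → ℝ) :
    mink d x (a • y) = a * mink d x y := by
  rw [mink_comm, mink_smul_left, mink_comm]

theorem continuous_mink_left (η : Fin (d+1) → ℝ) :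
    Continuous fun x => mink d x η := by
  unfold mink
  fun_prop

theorem mink_single_last (x : Fin (d+1) → ℝ) :
    mink d x (Pi.single (Fin.last d) 1) = -x (Fin.last d) := by
  simp [mink, (Fin.castSucc_lt_last _).ne]

theorem single_last_mem_hyperboloid : Pi.single (Fin.last d) 1 ∈ Hyperboloid d := by
  simp [Hyperboloid, mink_single_last]

theorem exists_mink_eq (L : (Fin (d+1) → ℝ) →ₗ[ℝ] ℝ) : ∃ x, ∀ η, mink d x η = L η := by
  refine ⟨Fin.snoc (fun i : Fin d => L (Pi.single i.castSucc 1)) (-L (Pi.single (Fin.last d) 1)),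
    fun η => ?_⟩
  have hsingle : ∀ i, L (Pi.single i (η i)) = η i * L (Pi.single i 1) := fun i => by
    rw [← smul_eq_mul, ← map_smul, ← Pi.single_smul, smul_eq_mul, mul_one]
  conv_rhs => rw [← LinearMap.sum_single_apply _ η, map_sum, Fin.sum_univ_castSucc]
  simp [mink, hsingle, mul_comm]

end Minkowski

section FutureCone

variable {d : ℕ}

theorem mink_self (x : Fin (d+1) → ℝ) :
    mink d x x = ∑ i : Fin d, x i.castSucc ^ 2 - x (Fin.last d) ^ 2 := by
  simp only [mink, sq]

theorem sqrt_lt_of_mem_futureCone {x : Fin (d+1) → ℝ} (hx : x ∈ FutureCone d) :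
    √(∑ i : Fin d, x i.castSucc ^ 2) < x (Fin.last d) :=
  (Real.sqrt_lt' hx.2).2 (by linarith [mink_self x, hx.1])

theorem mink_neg_of_mem_futureCone {x y : Fin (d+1) → ℝ} (hx : x ∈ FutureCone d)
    (hy : y ∈ FutureCone d) : mink d x y < 0 := by
  have hcs := Real.sum_mul_le_sqrt_mul_sqrt Finset.univ (fun i : Fin d => x i.castSucc)
    (fun i => y i.castSucc)
  have := mul_lt_mul'' (sqrt_lt_of_mem_futureCone hx) (sqrt_lt_of_mem_futureCone hy)
    (Real.sqrt_nonneg _) (Real.sqrt_nonneg _)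
  unfold mink
  linarith

theorem smul_mem_futureCone {x : Fin (d+1) → ℝ} (hx : x ∈ FutureCone d) {l : ℝ} (hl : 0 < l) :
    l • x ∈ FutureCone d := by
  refine ⟨?_, by simpa using mul_pos hl hx.2⟩
  rw [mink_smul_left, mink_smul_right, ← mul_assoc]
  exact mul_neg_of_pos_of_neg (mul_pos hl hl) hx.1

theorem add_mem_futureCone {x y : Fin (d+1) → ℝ} (hx : x ∈ FutureCone d)
    (hy : y ∈ FutureCone d) : x + y ∈ FutureCone d := by
  refine ⟨?_, by simpa using add_pos hx.2 hy.2⟩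
  rw [mink_add_left, mink_add_right, mink_add_right, mink_comm y x]
  linarith [hx.1, hy.1, mink_neg_of_mem_futureCone hx hy]

def futureConvexCone (d : ℕ) : ConvexCone ℝ (Fin (d+1) → ℝ) where
  carrier := FutureCone d
  smul_mem' _ hl _ hx := smul_mem_futureCone hx hl
  add_mem' _ hx _ hy := add_mem_futureCone hx hy

theorem isOpen_futureCone : IsOpen (FutureCone d) := by
  have hcont : Continuous fun x : Fin (d+1) → ℝ => mink d x x := by
    unfold mink
    fun_prop
  exact (isOpen_lt hcont continuous_const).inter (isOpen_lt continuous_const (continuous_apply _))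

theorem hyperboloid_subset_futureCone : Hyperboloid d ⊆ FutureCone d :=
  fun _ hx => ⟨by rw [hx.1]; norm_num, hx.2⟩

end FutureCone

section Coercive

variable {d : ℕ}

open Real in
theorem exists_mem_hyperboloid_neg_lt_mink {x : Fin (d+1) → ℝ} (hx : x ∉ FutureCone d)
    {ε : ℝ} (hε : 0 < ε) : ∃ η ∈ Hyperboloid d, -ε < mink d x η := by
  set X := x (Fin.last d)
  rcases le_or_gt X 0 with hX | hX
  · exact ⟨_, single_last_mem_hyperboloid, by rw [mink_single_last]; linarith⟩
  set A := ∑ i : Fin d, x i.castSucc ^ 2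
  have hXA : X ≤ √A := by
    refine (Real.le_sqrt hX.le (by positivity)).2 (not_lt.1 fun hAX => hx ⟨?_, hX⟩)
    rw [mink_self]
    linarith
  have hA : 0 < A := Real.sqrt_pos.1 (hX.trans_le hXA)
  obtain ⟨s, hsε, hs⟩ : ∃ s, X * exp (-s) < ε ∧ 0 ≤ s :=
    (((tendsto_exp_neg_atTop_nhds_zero.const_mul X).eventually
      (gt_mem_nhds (by simpa using hε))).and (eventually_ge_atTop 0)).exists
  -- the point of rapidity `s` on the hyperboloid in the spatial direction of `x`
  set η : Fin (d+1) → ℝ := Fin.snoc (fun i : Fin d => sinh s / √A * x i.castSucc) (cosh s)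
  have hηx : mink d x η = sinh s * √A - X * cosh s := by
    have : ∑ i : Fin d, x i.castSucc * (sinh s / √A * x i.castSucc) = sinh s / √A * A := by
      rw [Finset.mul_sum]
      exact Finset.sum_congr rfl fun i _ => by ring
    simp only [mink, η, Fin.snoc_castSucc, Fin.snoc_last, this]
    rw [div_mul_eq_mul_div, mul_div_assoc, Real.div_sqrt]
  refine ⟨η, ⟨?_, by simp [η, cosh_pos]⟩, ?_⟩
  · have : ∑ i : Fin d, η i.castSucc ^ 2 = sinh s ^ 2 := by
      simp only [η, Fin.snoc_castSucc, mul_pow, ← Finset.mul_sum, div_pow]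
      rw [Real.sq_sqrt hA.le, div_mul_cancel₀ _ hA.ne']
    rw [mink_self, this]
    simp only [η, Fin.snoc_last]
    linarith [cosh_sq_sub_sinh_sq s]
  · calc -ε < -(X * exp (-s)) := neg_lt_neg hsε
      _ = X * (sinh s - cosh s) := by rw [sinh_sub_cosh]; ring
      _ ≤ sinh s * √A - X * cosh s := by nlinarith [sinh_nonneg_iff.2 hs]
      _ = mink d x η := hηx.symm

theorem mem_futureCone_of_forall_mink_le {x : Fin (d+1) → ℝ} {m : ℝ} (hm : 0 < m)
    (hx : ∀ η ∈ Hyperboloid d, mink d x η ≤ -m) : x ∈ FutureCone d := by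
  by_contra hxF
  obtain ⟨η, hη, hlt⟩ := exists_mem_hyperboloid_neg_lt_mink hxF hm
  linarith [hx η hη]

end Coercive

def wulffShape (d : ℕ) (H : (Fin (d+1) → ℝ) → ℝ) : Set (Fin (d+1) → ℝ) :=
  {x ∈ FutureCone d | ∀ η ∈ FutureCone d, mink d x η ≤ H η}

section WulffShape

variable {d : ℕ} {H : (Fin (d+1) → ℝ) → ℝ}

theorem convex_wulffShape : Convex ℝ (wulffShape d H) := by
  intro x hx y hy a b ha hb hab
  refine ⟨(futureConvexCone d).convex hx.1 hy.1 ha hb hab, fun η hη => ?_⟩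
  rw [mink_add_left, mink_smul_left, mink_smul_left]
  calc a * mink d x η + b * mink d y η ≤ a * H η + b * H η := by
        gcongr
        exacts [hx.2 η hη, hy.2 η hη]
    _ = H η := by rw [← add_mul, hab, one_mul]

theorem isClosed_wulffShape
    (hcoer : ∀ x, (∀ η ∈ FutureCone d, mink d x η ≤ H η) → x ∈ FutureCone d) :
    IsClosed (wulffShape d H) := by
  have : wulffShape d H = ⋂ η ∈ FutureCone d, {x | mink d x η ≤ H η} := by
    ext x
    simp only [wulffShape, mem_iInter]
    exact ⟨fun hx => hx.2, fun hx => ⟨hcoer x hx, hx⟩⟩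
  rw [this]
  exact isClosed_biInter fun η _ => isClosed_le (continuous_mink_left η) continuous_const

theorem wulffShape_ne_futureCone (hneg : ∀ η ∈ FutureCone d, H η < 0) :
    wulffShape d H ≠ FutureCone d := by
  set e : Fin (d+1) → ℝ := Pi.single (Fin.last d) 1
  have he : e ∈ FutureCone d := hyperboloid_subset_futureCone single_last_mem_hyperboloid
  have hHe := hneg e he
  intro h
  have hmem : (-H e / 2) • e ∈ wulffShape d H := h ▸ smul_mem_futureCone he (by linarith)
  have := hmem.2 e he
  rw [mink_smul_left, mink_single_last] at this
  simp only [e, Pi.single_eq_same] at this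
  linarith

variable {Γ : Subgroup ((Fin (d+1) → ℝ) ≃ₗ[ℝ] (Fin (d+1) → ℝ))}

theorem mapsTo_wulffShape (hΓ : IsFuchsian d Γ)
    (hinv : ∀ γ ∈ Γ, ∀ η ∈ FutureCone d, H (γ η) = H η) {γ} (hγ : γ ∈ Γ) :
    MapsTo γ (wulffShape d H) (wulffShape d H) := by
  intro x hx
  refine ⟨hΓ.cone γ hγ x hx.1, fun η hη => ?_⟩
  have hγη : γ⁻¹ η ∈ FutureCone d := hΓ.cone _ (inv_mem hγ) η hη
  have hη_eq : γ (γ⁻¹ η) = η := γ.apply_symm_apply η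
  calc mink d (γ x) η = mink d x (γ⁻¹ η) := by rw [← hΓ.isom γ hγ x, hη_eq]
    _ ≤ H (γ⁻¹ η) := hx.2 _ hγη
    _ = H η := by rw [← hinv γ hγ _ hγη, hη_eq]

theorem image_wulffShape (hΓ : IsFuchsian d Γ)
    (hinv : ∀ γ ∈ Γ, ∀ η ∈ FutureCone d, H (γ η) = H η) {γ} (hγ : γ ∈ Γ) :
    γ '' wulffShape d H = wulffShape d H := by
  refine (mapsTo_wulffShape hΓ hinv hγ).image_subset.antisymm fun x hx => ?_
  exact ⟨γ⁻¹ x, mapsTo_wulffShape hΓ hinv (inv_mem hγ) hx, γ.apply_symm_apply x⟩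

end WulffShape

theorem exists_mem_wulffShape_mink_eq {d : ℕ} {H : (Fin (d+1) → ℝ) → ℝ}
    (hconv : ConvexOn ℝ (FutureCone d) H)
    (hhom : ∀ η ∈ FutureCone d, ∀ l : ℝ, 0 < l → H (l • η) = l * H η)
    (hcoer : ∀ x, (∀ η ∈ FutureCone d, mink d x η ≤ H η) → x ∈ FutureCone d)
    {η : Fin (d+1) → ℝ} (hη : η ∈ FutureCone d) :
    ∃ x ∈ wulffShape d H, mink d x η = H η := by
  obtain ⟨L, hLH, hLη⟩ := hconv.exists_le_eq_of_homogeneous (futureConvexCone d)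
    isOpen_futureCone (hconv.continuousOn isOpen_futureCone) hhom hη
  obtain ⟨x, hx⟩ := exists_mink_eq (d := d) L
  have hxH : ∀ η ∈ FutureCone d, mink d x η ≤ H η := fun η hη => (hx η).trans_le (hLH η hη)
  exact ⟨x, ⟨hcoer x hxH, hxH⟩, (hx η).trans hLη⟩

/-- A negative sublinear Γ-invariant function H on the future cone is the extended
support function of the Γ-convex body {x ∈ 𝓕 : ⟨x,η⟩₋ ≤ H(η) ∀η ∈ 𝓕}. -/
theorem stmt11 (d : ℕ) (Γ : Subgroup ((Fin (d+1) → ℝ) ≃ₗ[ℝ] (Fin (d+1) → ℝ)))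
    (hΓ : IsFuchsian d Γ) (H : (Fin (d+1) → ℝ) → ℝ)
    (hneg : ∀ η ∈ FutureCone d, H η < 0)
    (hhom : ∀ η ∈ FutureCone d, ∀ l : ℝ, 0 < l → H (l • η) = l * H η)
    (hsub : ∀ η ∈ FutureCone d, ∀ μ ∈ FutureCone d, H (η + μ) ≤ H η + H μ)
    (hinv : ∀ γ ∈ Γ, ∀ η ∈ FutureCone d, H (γ η) = H η) :
    IsFuchsianConvexBody d Γ
      {x ∈ FutureCone d | ∀ η ∈ FutureCone d, mink d x η ≤ H η} ∧
    ∀ η ∈ FutureCone d,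
      IsLUB ((fun x => mink d x η) ''
        {x ∈ FutureCone d | ∀ η ∈ FutureCone d, mink d x η ≤ H η}) (H η) := by
  have hconv : ConvexOn ℝ (FutureCone d) H :=
    (futureConvexCone d).convexOn_of_subadditive hhom hsub
  have hHF : Hyperboloid d ⊆ FutureCone d := hyperboloid_subset_futureCone
  obtain ⟨C, hC, hCH, hcov⟩ := hΓ.cocompact
  obtain ⟨η₀, hη₀, hmax⟩ := exists_isMaxOn_of_cocompact (Γ := (Γ : Set _)) hC hCH hcov
    ⟨_, single_last_mem_hyperboloid⟩ ((hconv.continuousOn isOpen_futureCone).mono (hCH.trans hHF))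
    fun γ hγ c hc => hinv γ hγ c (hHF (hCH hc))
  -- `H` is bounded away from `0` on the hyperboloid, which forces the Wulff shape into the open cone
  have hcoer : ∀ x, (∀ η ∈ FutureCone d, mink d x η ≤ H η) → x ∈ FutureCone d :=
    fun x hx => mem_futureCone_of_forall_mink_le (neg_pos.2 (hneg η₀ (hHF hη₀)))
      fun η hη => (hx η (hHF hη)).trans (by simpa using hmax hη)
  obtain ⟨x₀, hx₀, -⟩ := exists_mem_wulffShape_mink_eq hconv hhom hcoer
    (hHF single_last_mem_hyperboloid)
  refine ⟨⟨⟨x₀, hx₀⟩, isClosed_wulffShape hcoer, convex_wulffShape, fun x hx => hx.1,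
    wulffShape_ne_futureCone hneg, fun γ hγ => image_wulffShape hΓ hinv hγ⟩, fun η hη => ?_⟩
  obtain ⟨x, hx, hxη⟩ := exists_mem_wulffShape_mink_eq hconv hhom hcoer hη
  exact IsGreatest.isLUB ⟨⟨x, hx, hxη⟩, by rintro _ ⟨y, hy, rfl⟩; exact hy.2 η hη⟩
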